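/- arXiv:1510.03590 — 3 statements merged into one kernel-verified Lean document; each statement's English description precedes it below -/
import Mathlib

section
/- Let (Ω, F, P) be a probability space, W : Ω → ℝ^q a random vector, Z : Ω → ℝ a nonnegative random variable with P(Z > 0) > 0, and T > 0. Assume that for every θ ∈ ℝ^q, E[Z·exp(−θ·W)] < ∞. Then the function v : ℝ^q → ℝ defined by v(θ) = E[Z·exp(−θ·W + |θ|²T/2)] is finite everywhere and strictly convex on ℝ^q. -/
open MeasureTheory ProbabilityTheory Filter
open scoped RealInnerProductSpace

section aux

variable {E : Type*} [NormedAddCommGroup E] [InnerProductSpace ℝ E]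

private lemma normsq_strict {x y : E} (hxy : x ≠ y) {a b : ℝ} (ha : 0 < a) (hb : 0 < b)
    (hab : a + b = 1) : ‖a • x + b • y‖ ^ 2 < a * ‖x‖ ^ 2 + b * ‖y‖ ^ 2 := by
  have hsub : (0:ℝ) < ‖x - y‖ ^ 2 :=
    pow_pos (norm_pos_iff.mpr (sub_ne_zero.mpr hxy)) 2
  have h1 : ‖a • x + b • y‖ ^ 2
      = a^2 * ‖x‖^2 + 2*(a*b)*⟪x,y⟫ + b^2 * ‖y‖^2 := by
    rw [norm_add_sq_real, norm_smul, norm_smul, real_inner_smul_left, real_inner_smul_right]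
    rw [Real.norm_eq_abs, Real.norm_eq_abs, abs_of_pos ha, abs_of_pos hb]
    ring
  have h2 : ‖x - y‖ ^ 2 = ‖x‖^2 - 2*⟪x,y⟫ + ‖y‖^2 := by
    rw [norm_sub_sq_real]
  nlinarith [mul_pos ha hb, mul_pos (mul_pos ha hb) hsub]

private lemma key (T : ℝ) (hT : 0 < T) (w : E) {x y : E} (hxy : x ≠ y) {a b : ℝ}
    (ha : 0 < a) (hb : 0 < b) (hab : a + b = 1) :
    Real.exp (-⟪a • x + b • y, w⟫ + ‖a • x + b • y‖ ^ 2 * T / 2)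
      < a * Real.exp (-⟪x, w⟫ + ‖x‖ ^ 2 * T / 2)
        + b * Real.exp (-⟪y, w⟫ + ‖y‖ ^ 2 * T / 2) := by
  set u := -⟪x, w⟫ + ‖x‖ ^ 2 * T / 2 with hu
  set v := -⟪y, w⟫ + ‖y‖ ^ 2 * T / 2 with hv
  have hinner : ⟪a • x + b • y, w⟫ = a * ⟪x, w⟫ + b * ⟪y, w⟫ := by
    rw [inner_add_left, real_inner_smul_left, real_inner_smul_left]
  have hlt : -⟪a • x + b • y, w⟫ + ‖a • x + b • y‖ ^ 2 * T / 2 < a * u + b * v := by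
    have := normsq_strict hxy ha hb hab
    rw [hinner, hu, hv]
    nlinarith
  calc Real.exp (-⟪a • x + b • y, w⟫ + ‖a • x + b • y‖ ^ 2 * T / 2)
      < Real.exp (a * u + b * v) := Real.exp_lt_exp.mpr hlt
    _ ≤ a * Real.exp u + b * Real.exp v := by
        have := convexOn_exp.2 (Set.mem_univ u) (Set.mem_univ v) ha.le hb.le hab
        simpa [smul_eq_mul] using this

end aux

/-- Lemma `lem:convex` (finiteness and strict convexity): if `Z ≥ 0`,
`P(Z > 0) > 0` and `E[Z·exp(−θ·W)] < ∞` for every `θ`, then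
`v(θ) = E[Z·exp(−θ·W + |θ|²T/2)]` is finite everywhere and strictly convex. -/
theorem stmt_4 {Ω : Type*} [MeasureSpace Ω] [IsProbabilityMeasure (ℙ : Measure Ω)]
    {q : ℕ} (T : ℝ) (hT : 0 < T)
    (W : Ω → EuclideanSpace ℝ (Fin q)) (hWmeas : Measurable W)
    (Z : Ω → ℝ) (hZmeas : Measurable Z) (hZnonneg : ∀ ω, 0 ≤ Z ω)
    (hZpos : 0 < (ℙ : Measure Ω) {ω | 0 < Z ω})
    (hintexp : ∀ θ : EuclideanSpace ℝ (Fin q),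
      Integrable (fun ω => Z ω * Real.exp (-⟪θ, W ω⟫)) ℙ)
    (v : EuclideanSpace ℝ (Fin q) → ℝ)
    (hv : ∀ θ, v θ = ∫ ω, Z ω * Real.exp (-⟪θ, W ω⟫ + ‖θ‖ ^ 2 * T / 2) ∂ℙ) :
    (∀ θ : EuclideanSpace ℝ (Fin q),
      Integrable (fun ω => Z ω * Real.exp (-⟪θ, W ω⟫ + ‖θ‖ ^ 2 * T / 2)) ℙ) ∧
    StrictConvexOn ℝ Set.univ v := by
  have hint : ∀ θ : EuclideanSpace ℝ (Fin q),
      Integrable (fun ω => Z ω * Real.exp (-⟪θ, W ω⟫ + ‖θ‖ ^ 2 * T / 2)) ℙ := by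
    intro θ
    have h := (hintexp θ).mul_const (Real.exp (‖θ‖ ^ 2 * T / 2))
    refine h.congr (Eventually.of_forall fun ω => ?_)
    simp only [Real.exp_add]; ring
  refine ⟨hint, convex_univ, fun x _ y _ hxy a b ha hb hab => ?_⟩
  set fx := fun ω => Z ω * Real.exp (-⟪x, W ω⟫ + ‖x‖ ^ 2 * T / 2) with hfx
  set fy := fun ω => Z ω * Real.exp (-⟪y, W ω⟫ + ‖y‖ ^ 2 * T / 2) with hfy
  set fm := fun ω => Z ω * Real.exp (-⟪a • x + b • y, W ω⟫ + ‖a • x + b • y‖ ^ 2 * T / 2)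
    with hfm
  have hix : Integrable fx ℙ := hint x
  have hiy : Integrable fy ℙ := hint y
  have him : Integrable fm ℙ := hint (a • x + b • y)
  set g := fun ω => a * fx ω + b * fy ω - fm ω with hg
  have hgnn : ∀ ω, 0 ≤ g ω := by
    intro ω
    have hk := key T hT (W ω) hxy ha hb hab
    have : fm ω ≤ a * fx ω + b * fy ω := by
      simp only [hfm, hfx, hfy]
      calc Z ω * Real.exp (-⟪a • x + b • y, W ω⟫ + ‖a • x + b • y‖ ^ 2 * T / 2)
          ≤ Z ω * (a * Real.exp (-⟪x, W ω⟫ + ‖x‖ ^ 2 * T / 2)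
              + b * Real.exp (-⟪y, W ω⟫ + ‖y‖ ^ 2 * T / 2)) :=
            mul_le_mul_of_nonneg_left hk.le (hZnonneg ω)
        _ = _ := by ring
    simpa [hg] using sub_nonneg.mpr this
  have hadd : Integrable (fun ω => a * fx ω + b * fy ω) ℙ :=
    (hix.const_mul a).add (hiy.const_mul b)
  have hgi : Integrable g ℙ := hadd.sub him
  have hgpos : 0 < ∫ ω, g ω ∂ℙ := by
    rw [integral_pos_iff_support_of_nonneg hgnn hgi]
    refine lt_of_lt_of_le hZpos (measure_mono ?_)
    intro ω hω
    have hZω : 0 < Z ω := hω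
    have hk := key T hT (W ω) hxy ha hb hab
    have : fm ω < a * fx ω + b * fy ω := by
      simp only [hfm, hfx, hfy]
      calc Z ω * Real.exp (-⟪a • x + b • y, W ω⟫ + ‖a • x + b • y‖ ^ 2 * T / 2)
          < Z ω * (a * Real.exp (-⟪x, W ω⟫ + ‖x‖ ^ 2 * T / 2)
              + b * Real.exp (-⟪y, W ω⟫ + ‖y‖ ^ 2 * T / 2)) :=
            mul_lt_mul_of_pos_left hk hZω
        _ = _ := by ring
    exact (ne_of_gt (by simpa [hg] using sub_pos.mpr this))
  have hgint : ∫ ω, g ω ∂ℙ = a * ∫ ω, fx ω ∂ℙ + b * ∫ ω, fy ω ∂ℙ - ∫ ω, fm ω ∂ℙ := by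
    rw [hg, integral_sub hadd him, integral_add (hix.const_mul a) (hiy.const_mul b),
      integral_const_mul, integral_const_mul]
  have : v (a • x + b • y) < a * v x + b * v y := by
    rw [hv, hv, hv]
    have := hgpos
    rw [hgint] at this
    linarith
  simpa [smul_eq_mul] using this
end

section
/- Let (f_n)_n be a sequence of convex functions f_n : ℝ^q → ℝ converging locally uniformly (i.e. uniformly on every compact subset of ℝ^q) to a strictly convex continuous function f : ℝ^q → ℝ that admits a global minimizer θ* ∈ ℝ^q. For each n, let θ_n ∈ ℝ^q be a global minimizer of f_n. Then θ_n → θ* as n → ∞. Moreover, f_n(θ_n) → f(θ*). -/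
/-!
A strictly convex `G` with minimizer `x₀` exceeds `G x₀` by a fixed margin on each compact
sphere around `x₀`. Once `F i` is uniformly close to `G` on the enclosed ball, `F i` is larger on
that sphere than at `x₀`, and by convexity of `F i` the whole sublevel set `{F i ≤ F i x₀}`,
which contains the minimizer of `F i`, lies inside the sphere. Convergence of the minimal values
then follows from locally uniform convergence and continuity of `G`.
-/

open Filter Metric Set Topology

theorem StrictConvexOn.lt_of_isMinOn {𝕜 E β : Type*} [Field 𝕜] [LinearOrder 𝕜]
    [IsStrictOrderedRing 𝕜] [AddCommMonoid E] [SMul 𝕜 E] [AddCommMonoid β] [LinearOrder β]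
    [IsOrderedAddMonoid β] [Module 𝕜 β] [PosSMulMono 𝕜 β]
    {s : Set E} {G : E → β} (hG : StrictConvexOn 𝕜 s G) {x₀ y : E} (hx₀ : IsMinOn G s x₀)
    (hx₀s : x₀ ∈ s) (hy : y ∈ s) (hne : y ≠ x₀) : G x₀ < G y :=
  lt_of_not_ge fun h ↦ hne <| hG.eq_of_isMinOn (fun _ hz ↦ h.trans (hx₀ hz)) hx₀ hy hx₀s

theorem IsCompact.exists_gt_forall_le {X β : Type*} [TopologicalSpace X] [LinearOrder β]
    [TopologicalSpace β] [ClosedIicTopology β] [NoMaxOrder β] {K : Set X} (hK : IsCompact K)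
    {g : X → β} (hg : ContinuousOn g K) {c : β} (hc : ∀ y ∈ K, c < g y) :
    ∃ m, c < m ∧ ∀ y ∈ K, m ≤ g y := by
  rcases K.eq_empty_or_nonempty with rfl | hne
  · obtain ⟨m, hm⟩ := exists_gt c
    exact ⟨m, hm, by simp⟩
  · obtain ⟨z, hz, hmin⟩ := hK.exists_isMinOn hne hg
    exact ⟨g z, hc z hz, hmin⟩

section

variable {E : Type*} [NormedAddCommGroup E] [NormedSpace ℝ E]

theorem ConvexOn.dist_lt_of_le_of_lt_on_sphere {g : E → ℝ} (hg : ConvexOn ℝ univ g)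
    {x₀ x : E} {r : ℝ} (hr : 0 < r) (hsphere : ∀ y ∈ sphere x₀ r, g x₀ < g y)
    (hx : g x ≤ g x₀) : dist x x₀ < r := by
  by_contra! hrx
  have hd : 0 < dist x₀ x := dist_comm x x₀ ▸ hr.trans_le hrx
  set t := r / dist x₀ x
  have ht : t ∈ Icc (0 : ℝ) 1 :=
    ⟨by positivity, (div_le_one hd).2 (dist_comm x x₀ ▸ hrx)⟩
  set p := AffineMap.lineMap x₀ x t
  have hp : p ∈ sphere x₀ r := by
    rw [mem_sphere, dist_lineMap_left, Real.norm_of_nonneg ht.1, div_mul_cancel₀ _ hd.ne']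
  have hp_seg : p ∈ segment ℝ x₀ x := segment_eq_image_lineMap ℝ x₀ x ▸ mem_image_of_mem _ ht
  have hgp : g p ≤ g x₀ :=
    (hg.le_on_segment (mem_univ _) (mem_univ _) hp_seg).trans (max_le le_rfl hx)
  exact (hsphere p hp).not_ge hgp

theorem eventually_dist_lt_of_tendstoUniformlyOn_closedBall {ι : Type*} {l : Filter ι}
    {F : ι → E → ℝ} {G : E → ℝ} (hF : ∀ i, ConvexOn ℝ univ (F i)) {x₀ : E} {r m : ℝ}
    (hr : 0 < r) (hgap : G x₀ < m) (hm : ∀ y ∈ sphere x₀ r, m ≤ G y)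
    (hunif : TendstoUniformlyOn F G l (closedBall x₀ r)) {x : ι → E}
    (hx : ∀ i, F i (x i) ≤ F i x₀) : ∀ᶠ i in l, dist (x i) x₀ < r := by
  set δ := (m - G x₀) / 2 with hδ_def
  have hδ : 0 < δ := by linarith
  filter_upwards [Metric.tendstoUniformlyOn_iff.1 hunif δ hδ] with i hi
  refine (hF i).dist_lt_of_le_of_lt_on_sphere hr (fun y hy ↦ ?_) (hx i)
  have hy' := abs_lt.1 (hi y (sphere_subset_closedBall hy))
  have hx₀' := abs_lt.1 (hi x₀ (mem_closedBall_self hr.le))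
  linarith [hm y hy, hy'.1, hx₀'.2]

theorem StrictConvexOn.tendsto_of_tendstoLocallyUniformly [ProperSpace E] {ι : Type*}
    {l : Filter ι} {F : ι → E → ℝ} {G : E → ℝ} (hF : ∀ i, ConvexOn ℝ univ (F i))
    (hG : StrictConvexOn ℝ univ G) (hGc : Continuous G) (hunif : TendstoLocallyUniformly F G l)
    {x₀ : E} (hx₀ : IsMinOn G univ x₀) {x : ι → E} (hx : ∀ i, F i (x i) ≤ F i x₀) :
    Tendsto x l (𝓝 x₀) := by
  refine Metric.tendsto_nhds.2 fun r hr ↦ ?_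
  obtain ⟨m, hgap, hm⟩ := (isCompact_sphere x₀ r).exists_gt_forall_le hGc.continuousOn
    fun y hy ↦ hG.lt_of_isMinOn hx₀ (mem_univ _) (mem_univ _) (ne_of_mem_sphere hy hr.ne')
  exact eventually_dist_lt_of_tendstoUniformlyOn_closedBall hF hr hgap hm
    (tendstoLocallyUniformly_iff_forall_isCompact.1 hunif _ (isCompact_closedBall x₀ r)) hx

end

/-- Convergence of minimizers: if convex functions `f_n` converge locally
uniformly (uniformly on every compact set) to a strictly convex continuous
function `f` with global minimizer `θ*`, and `θ_n` is a global minimizer of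
`f_n`, then `θ_n → θ*` and `f_n(θ_n) → f(θ*)`. -/
theorem stmt_10 {q : ℕ} (f : ℕ → EuclideanSpace ℝ (Fin q) → ℝ)
    (hconv : ∀ n, ConvexOn ℝ Set.univ (f n))
    (flim : EuclideanSpace ℝ (Fin q) → ℝ)
    (hstrict : StrictConvexOn ℝ Set.univ flim)
    (hcont : Continuous flim)
    (hunif : ∀ K : Set (EuclideanSpace ℝ (Fin q)), IsCompact K →
      TendstoUniformlyOn f flim atTop K)
    (θs : EuclideanSpace ℝ (Fin q)) (hθs : ∀ θ, flim θs ≤ flim θ)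
    (θ : ℕ → EuclideanSpace ℝ (Fin q)) (hθ : ∀ n θ', f n (θ n) ≤ f n θ') :
    Tendsto θ atTop (nhds θs) ∧
      Tendsto (fun n => f n (θ n)) atTop (nhds (flim θs)) := by
  have hloc : TendstoLocallyUniformly f flim atTop :=
    tendstoLocallyUniformly_iff_forall_isCompact.2 hunif
  have hθ_lim : Tendsto θ atTop (𝓝 θs) :=
    hstrict.tendsto_of_tendstoLocallyUniformly hconv hcont hloc (fun θ _ ↦ hθs θ)
      fun n ↦ hθ n θs
  exact ⟨hθ_lim, hloc.tendsto_comp hcont.continuousAt hθ_lim⟩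
end

section
/- Let (Y_{i,m})_{i,m≥1} be a doubly indexed family of integrable centered random vectors in ℝ^d (E[Y_{i,m}] = 0 for all i, m) on a probability space (Ω, F, P), and set Ȳ_{k,m} = (1/k) Σ_{i=1}^k Y_{i,m}. Assume there is κ > 0 such that sup_k sup_m k·E[|Ȳ_{k,m}|²] ≤ κ and sup_k sup_m E[|Y_{k,m}|²] ≤ κ. Define the block maxima Z_{n,m} = max_{n² ≤ k < (n+1)²} |Ȳ_{k,m}|. Then there is a constant C > 0, depending only on κ, such that for all n ≥ 1 and all m, E[Z_{n,m}²] ≤ C/n². -/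
/-!
On a block `n² ≤ k < (n+1)²`, splitting the sum defining `Ȳ_k` at `n²` gives
`|Ȳ_k| ≤ |Ȳ_{n²}| + n⁻² ∑ |Y_i|`, summed over the `2n` indices `n² ≤ i < (n+1)² - 1`.
By Cauchy–Schwarz the second moment of that sum is at most `(2n)² κ`, so
`E[Z²] ≤ 2 E|Ȳ_{n²}|² + 2 n⁻⁴ (2n)² κ ≤ 10 κ / n²`.

The bound `E|Y_i|² ≤ κ` says nothing when `|Y_i|²` is not integrable (its integral is then `0`).
This is harmless: if `Z²` is not integrable, `E[Z²] = 0`; otherwise every `Ȳ_k` of the block is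
in `L²`, hence so is every `Y_i = (i+1) Ȳ_{i+1} - i Ȳ_i` in the sum.
-/

open MeasureTheory ProbabilityTheory Finset

noncomputable def runningAverage {E : Type*} [AddCommGroup E] [Module ℝ E] (y : ℕ → E)
    (k : ℕ) : E :=
  (k : ℝ)⁻¹ • ∑ i ∈ range k, y i

theorem Finset.le_ciSup₂_of_mem {ι α : Type*} [ConditionallyCompleteLattice α] {s : Finset ι}
    (f : ι → α) {k : ι} (hk : k ∈ s) : f k ≤ ⨆ i ∈ s, f i :=
  le_ciSup₂ (f := fun i (_ : i ∈ s) => f i)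
    ((s.finite_toSet.image f).bddAbove.mono
      (Set.iUnion_subset fun _ => Set.range_subset_iff.2 (Set.mem_image_of_mem f))) k hk

section RunningAverage

variable {E : Type*} [AddCommGroup E] [Module ℝ E] (y : ℕ → E)

theorem natCast_smul_runningAverage (k : ℕ) :
    (k : ℝ) • runningAverage y k = ∑ i ∈ range k, y i := by
  rcases k.eq_zero_or_pos with rfl | hk
  · simp
  · exact smul_inv_smul₀ (by positivity) _

theorem eq_sub_smul_runningAverage (i : ℕ) :
    y i = ((i + 1 : ℕ) : ℝ) • runningAverage y (i + 1) - (i : ℝ) • runningAverage y i := by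
  rw [natCast_smul_runningAverage, natCast_smul_runningAverage, sum_range_succ,
    add_sub_cancel_left]

end RunningAverage

section NormRunningAverage

variable {E : Type*} [NormedAddCommGroup E] [NormedSpace ℝ E] (y : ℕ → E)

theorem norm_runningAverage_le {a k b : ℕ} (ha : 0 < a) (hak : a ≤ k) (hkb : k ≤ b) :
    ‖runningAverage y k‖ ≤ ‖runningAverage y a‖ + (a : ℝ)⁻¹ * ∑ i ∈ Ico a b, ‖y i‖ := by
  have ha' : (0 : ℝ) < a := by exact_mod_cast ha
  have hak' : (a : ℝ) ≤ k := by exact_mod_cast hak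
  have hsplit : runningAverage y k
      = ((a : ℝ) / k) • runningAverage y a + (k : ℝ)⁻¹ • ∑ i ∈ Ico a k, y i := by
    rw [runningAverage, ← sum_range_add_sum_Ico y hak, ← natCast_smul_runningAverage y a,
      smul_add, smul_smul, div_eq_inv_mul]
  calc ‖runningAverage y k‖
      ≤ (a / k) * ‖runningAverage y a‖ + (k : ℝ)⁻¹ * ∑ i ∈ Ico a k, ‖y i‖ := by
        rw [hsplit]
        refine (norm_add_le _ _).trans ?_
        rw [norm_smul, norm_smul, Real.norm_of_nonneg (by positivity),
          Real.norm_of_nonneg (by positivity)]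
        gcongr
        exact norm_sum_le _ _
    _ ≤ ‖runningAverage y a‖ + (a : ℝ)⁻¹ * ∑ i ∈ Ico a b, ‖y i‖ := by
        gcongr
        exact mul_le_of_le_one_left (norm_nonneg _) (div_le_one_of_le₀ hak' (by positivity))

theorem biSup_norm_runningAverage_le {a b : ℕ} (ha : 0 < a) :
    ⨆ k ∈ Ico a b, ‖runningAverage y k‖
      ≤ ‖runningAverage y a‖ + (a : ℝ)⁻¹ * ∑ i ∈ Ico a (b - 1), ‖y i‖ := by
  have hbound : 0 ≤ ‖runningAverage y a‖ + (a : ℝ)⁻¹ * ∑ i ∈ Ico a (b - 1), ‖y i‖ := by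
    positivity
  refine Real.iSup_le (fun k => Real.iSup_le (fun hk => ?_) hbound) hbound
  rw [mem_Ico] at hk
  exact norm_runningAverage_le y ha hk.1 (by omega)

end NormRunningAverage

section Moments

variable {Ω : Type*} [MeasurableSpace Ω] {μ : Measure Ω}

theorem aestronglyMeasurable_runningAverage {E : Type*} [NormedAddCommGroup E]
    [NormedSpace ℝ E] {Y : ℕ → Ω → E} (hY : ∀ i, AEStronglyMeasurable (Y i) μ) (k : ℕ) :
    AEStronglyMeasurable (fun ω => runningAverage (Y · ω) k) μ :=
  (Finset.aestronglyMeasurable_fun_sum _ fun i _ => hY i).const_smul _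

theorem memLp_of_memLp_runningAverage {E : Type*} [NormedAddCommGroup E] [NormedSpace ℝ E]
    {Y : ℕ → Ω → E} {p : ENNReal} {i : ℕ}
    (hi : MemLp (fun ω => runningAverage (Y · ω) i) p μ)
    (hi' : MemLp (fun ω => runningAverage (Y · ω) (i + 1)) p μ) : MemLp (Y i) p μ := by
  have hY : Y i = fun ω => ((i + 1 : ℕ) : ℝ) • runningAverage (Y · ω) (i + 1)
      - (i : ℝ) • runningAverage (Y · ω) i :=
    funext fun ω => eq_sub_smul_runningAverage (Y · ω) i
  rw [hY]
  exact (hi'.const_smul _).sub (hi.const_smul _)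

theorem memLp_two_of_sq_norm_le {E : Type*} [NormedAddCommGroup E] {f : Ω → E} {g : Ω → ℝ}
    (hf : AEStronglyMeasurable f μ) (hg : Integrable g μ) (hfg : ∀ᵐ ω ∂μ, ‖f ω‖ ^ 2 ≤ g ω) :
    MemLp f 2 μ := by
  refine (memLp_two_iff_integrable_sq_norm hf).2 (hg.mono' (hf.norm.pow 2) ?_)
  filter_upwards [hfg] with ω hω
  rwa [Real.norm_of_nonneg (by positivity)]

theorem integral_sq_le_of_le_add {Z f g : Ω → ℝ} (hZ₀ : 0 ≤ Z) (hZ : Z ≤ f + g)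
    (hf : MemLp f 2 μ) (hg : MemLp g 2 μ) :
    ∫ ω, Z ω ^ 2 ∂μ ≤ 2 * ∫ ω, f ω ^ 2 ∂μ + 2 * ∫ ω, g ω ^ 2 ∂μ := by
  have hint : Integrable (fun ω => 2 * f ω ^ 2 + 2 * g ω ^ 2) μ :=
    (hf.integrable_sq.const_mul 2).add (hg.integrable_sq.const_mul 2)
  rw [← integral_const_mul, ← integral_const_mul,
    ← integral_add (hf.integrable_sq.const_mul 2) (hg.integrable_sq.const_mul 2)]
  refine integral_mono_of_nonneg (ae_of_all _ fun ω => sq_nonneg _) hint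
    (ae_of_all _ fun ω => ?_)
  have h := pow_le_pow_left₀ (hZ₀ ω) (hZ ω) 2
  simp only [Pi.add_apply] at h
  nlinarith [sq_nonneg (f ω - g ω)]

theorem integral_sq_sum_le {ι : Type*} (t : Finset ι) {g : ι → Ω → ℝ} {C : ℝ}
    (hg : ∀ i ∈ t, MemLp (g i) 2 μ) (hC : ∀ i ∈ t, ∫ ω, g i ω ^ 2 ∂μ ≤ C) :
    ∫ ω, (∑ i ∈ t, g i ω) ^ 2 ∂μ ≤ (#t : ℝ) ^ 2 * C := by
  have hsq : ∀ i ∈ t, Integrable (fun ω => g i ω ^ 2) μ :=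
    fun i hi => (hg i hi).integrable_sq
  calc ∫ ω, (∑ i ∈ t, g i ω) ^ 2 ∂μ
      ≤ ∫ ω, (#t : ℝ) * ∑ i ∈ t, g i ω ^ 2 ∂μ :=
        integral_mono (memLp_finsetSum t hg).integrable_sq
          ((integrable_finsetSum t hsq).const_mul _) fun ω => sq_sum_le_card_mul_sum_sq
    _ = (#t : ℝ) * ∑ i ∈ t, ∫ ω, g i ω ^ 2 ∂μ := by
        rw [integral_const_mul, integral_finsetSum t hsq]
    _ ≤ (#t : ℝ) * (#t • C) := by gcongr; exact sum_le_card_nsmul _ _ _ hC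
    _ = (#t : ℝ) ^ 2 * C := by rw [nsmul_eq_mul]; ring

theorem integral_sq_biSup_norm_runningAverage_le {E : Type*} [NormedAddCommGroup E]
    [NormedSpace ℝ E] {Y : ℕ → Ω → E} {a b : ℕ} {C : ℝ} (ha : 0 < a) (hab : a < b)
    (hY : ∀ i, AEStronglyMeasurable (Y i) μ)
    (hint : Integrable (fun ω => (⨆ k ∈ Ico a b, ‖runningAverage (Y · ω) k‖) ^ 2) μ)
    (hC : ∀ i ∈ Ico a (b - 1), ∫ ω, ‖Y i ω‖ ^ 2 ∂μ ≤ C) :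
    ∫ ω, (⨆ k ∈ Ico a b, ‖runningAverage (Y · ω) k‖) ^ 2 ∂μ
      ≤ 2 * ∫ ω, ‖runningAverage (Y · ω) a‖ ^ 2 ∂μ
        + 2 * ((b - 1 - a : ℕ) / (a : ℝ)) ^ 2 * C := by
  have hle_sup : ∀ k ∈ Ico a b, ∀ ω,
      ‖runningAverage (Y · ω) k‖ ≤ ⨆ j ∈ Ico a b, ‖runningAverage (Y · ω) j‖ :=
    fun k hk ω => le_ciSup₂_of_mem (fun j => ‖runningAverage (Y · ω) j‖) hk
  have ha_mem : a ∈ Ico a b := mem_Ico.2 ⟨le_rfl, hab⟩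
  have hYbar : ∀ k ∈ Ico a b, MemLp (fun ω => runningAverage (Y · ω) k) 2 μ :=
    fun k hk => memLp_two_of_sq_norm_le (aestronglyMeasurable_runningAverage hY k) hint
      (ae_of_all _ fun ω => pow_le_pow_left₀ (norm_nonneg _) (hle_sup k hk ω) 2)
  have hYi : ∀ i ∈ Ico a (b - 1), MemLp (Y i) 2 μ := fun i hi => by
    rw [mem_Ico] at hi
    exact memLp_of_memLp_runningAverage (hYbar i (mem_Ico.2 (by omega)))
      (hYbar (i + 1) (mem_Ico.2 (by omega)))
  have hsum := integral_sq_sum_le _ (fun i hi => (hYi i hi).norm) hC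
  rw [Nat.card_Ico] at hsum
  calc ∫ ω, (⨆ k ∈ Ico a b, ‖runningAverage (Y · ω) k‖) ^ 2 ∂μ
      ≤ 2 * ∫ ω, ‖runningAverage (Y · ω) a‖ ^ 2 ∂μ
        + 2 * ∫ ω, ((a : ℝ)⁻¹ * ∑ i ∈ Ico a (b - 1), ‖Y i ω‖) ^ 2 ∂μ :=
        integral_sq_le_of_le_add (fun ω => (norm_nonneg _).trans (hle_sup a ha_mem ω))
          (fun ω => biSup_norm_runningAverage_le _ ha) (hYbar a ha_mem).norm
          ((memLp_finsetSum _ fun i hi => (hYi i hi).norm).const_mul _)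
    _ ≤ 2 * ∫ ω, ‖runningAverage (Y · ω) a‖ ^ 2 ∂μ
          + 2 * ((b - 1 - a : ℕ) / (a : ℝ)) ^ 2 * C := by
        have hscaled :=
          mul_le_mul_of_nonneg_left hsum (by positivity : (0 : ℝ) ≤ ((a : ℝ) ^ 2)⁻¹)
        simp_rw [mul_pow, integral_const_mul, div_pow, div_eq_inv_mul, inv_pow]
        linarith

end Moments

theorem stmt_12_general {Ω : Type*} [MeasureSpace Ω] [IsProbabilityMeasure (ℙ : Measure Ω)]
    {d : ℕ}
    (Y : ℕ → ℕ → Ω → EuclideanSpace ℝ (Fin d))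
    (hint : ∀ i m, Integrable (Y i m) ℙ)
    (Ybar : ℕ → ℕ → Ω → EuclideanSpace ℝ (Fin d))
    (hYbar : ∀ k m ω, Ybar k m ω = (k : ℝ)⁻¹ • ∑ i ∈ Finset.range k, Y i m ω)
    (κ : ℝ) (hκ : 0 < κ)
    (h1 : ∀ (k m : ℕ), (k : ℝ) * ∫ ω, ‖Ybar k m ω‖ ^ 2 ∂ℙ ≤ κ)
    (h2 : ∀ (k m : ℕ), (∫ ω, ‖Y k m ω‖ ^ 2 ∂ℙ) ≤ κ)
    (Z : ℕ → ℕ → Ω → ℝ)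
    (hZ : ∀ n m ω, Z n m ω = ⨆ k ∈ Finset.Ico (n ^ 2) ((n + 1) ^ 2), ‖Ybar k m ω‖) :
    ∃ C > (0 : ℝ), ∀ (n : ℕ), 1 ≤ n → ∀ (m : ℕ),
      (∫ ω, (Z n m ω) ^ 2 ∂ℙ) ≤ C / (n : ℝ) ^ 2 := by
  obtain rfl : Ybar = fun k m ω => runningAverage (Y · m ω) k := by
    funext k m ω; exact hYbar k m ω
  obtain rfl :
      Z = fun n m ω => ⨆ k ∈ Ico (n ^ 2) ((n + 1) ^ 2), ‖runningAverage (Y · m ω) k‖ := by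
    funext n m ω; exact hZ n m ω
  refine ⟨10 * κ, by positivity, fun n hn m => ?_⟩
  by_cases hint_sq : Integrable
      (fun ω => (⨆ k ∈ Ico (n ^ 2) ((n + 1) ^ 2), ‖runningAverage (Y · m ω) k‖) ^ 2) ℙ
  swap
  · rw [integral_undef hint_sq]; positivity
  have hA : ∫ ω, ‖runningAverage (Y · m ω) (n ^ 2)‖ ^ 2 ∂ℙ ≤ κ / (n : ℝ) ^ 2 := by
    rw [le_div_iff₀ (by positivity), mul_comm]; exact_mod_cast h1 (n ^ 2) m
  have hgap : (n + 1) ^ 2 - 1 - n ^ 2 = 2 * n := by ring_nf; omega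
  calc _ ≤ 2 * ∫ ω, ‖runningAverage (Y · m ω) (n ^ 2)‖ ^ 2 ∂ℙ
          + 2 * (((n + 1) ^ 2 - 1 - n ^ 2 : ℕ) / ((n ^ 2 : ℕ) : ℝ)) ^ 2 * κ :=
        integral_sq_biSup_norm_runningAverage_le (by positivity)
          (Nat.pow_lt_pow_left n.lt_succ_self two_ne_zero)
          (fun i => (hint i m).aestronglyMeasurable) hint_sq (fun i _ => h2 i m)
    _ ≤ 2 * (κ / (n : ℝ) ^ 2) + 2 * (2 * n / (n : ℝ) ^ 2) ^ 2 * κ := by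
        rw [hgap]; push_cast; gcongr
    _ = 10 * κ / (n : ℝ) ^ 2 := by field_simp; ring

/-- Block-maxima moment bound from the proof of Proposition `slln2`: for
centered random vectors with uniformly bounded variances of the averages and of
the individual terms, the maxima `Z_{n,m}` of `|Ȳ_{k,m}|` over the blocks
`n² ≤ k < (n+1)²` satisfy `E[Z_{n,m}²] ≤ C/n²` for a constant `C` depending only
on `κ`. -/
theorem stmt_12 {Ω : Type*} [MeasureSpace Ω] [IsProbabilityMeasure (ℙ : Measure Ω)]
    {d : ℕ}
    (Y : ℕ → ℕ → Ω → EuclideanSpace ℝ (Fin d))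
    (hint : ∀ i m, Integrable (Y i m) ℙ)
    (hmean : ∀ i m, ∫ ω, Y i m ω ∂ℙ = 0)
    (Ybar : ℕ → ℕ → Ω → EuclideanSpace ℝ (Fin d))
    (hYbar : ∀ k m ω, Ybar k m ω = (k : ℝ)⁻¹ • ∑ i ∈ Finset.range k, Y i m ω)
    (κ : ℝ) (hκ : 0 < κ)
    (h1 : ∀ (k m : ℕ), (k : ℝ) * ∫ ω, ‖Ybar k m ω‖ ^ 2 ∂ℙ ≤ κ)
    (h2 : ∀ (k m : ℕ), (∫ ω, ‖Y k m ω‖ ^ 2 ∂ℙ) ≤ κ)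
    (Z : ℕ → ℕ → Ω → ℝ)
    (hZ : ∀ n m ω, Z n m ω = ⨆ k ∈ Finset.Ico (n ^ 2) ((n + 1) ^ 2), ‖Ybar k m ω‖) :
    ∃ C > (0 : ℝ), ∀ (n : ℕ), 1 ≤ n → ∀ (m : ℕ),
      (∫ ω, (Z n m ω) ^ 2 ∂ℙ) ≤ C / (n : ℝ) ^ 2 :=
  stmt_12_general Y hint Ybar hYbar κ hκ h1 h2 Z hZ
end
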